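/- Assume every complex eigenvalue of the symmetric matrix VᵀWWᵀV is rational. If τ > 1 is an integer with U^τ = I and U^s ≠ I for all integers s with 1 ≤ s < τ, then τ ∈ {2, 3, 4, 6, 12}. -/

import Mathlib

/-!
`U = B * A` is a product of the reflections `B = 2WWᵀ - 1` and `A = 2VVᵀ - 1`, so `A * B = U⁻¹`,
and compressing `B * A + A * B` to the range of `V` gives `Vᵀ (U + U⁻¹) = (4 VᵀWWᵀV - 2) Vᵀ`.
Hence for an eigenvector `x` of `U` with eigenvalue `μ`, either `Vᵀx = 0` and `μ = ±1`, or `Vᵀx`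
is an eigenvector of `VᵀWWᵀV` with eigenvalue `(μ + μ⁻¹ + 2) / 4`. In the second case `μ + μ⁻¹`
is a rational algebraic integer of absolute value at most `2`, which forces `μ ^ 12 = 1`.
As `U` has finite order it is diagonalisable over `ℂ`, so `U ^ 12 = 1` and `τ ∣ 12`.
-/

open Matrix Polynomial

lemma pow_twelve_eq_one_of_add_inv_eq_intCast {K : Type*} [Field K] {l : K} (hl : l ≠ 0)
    {m : ℤ} (hm : |m| ≤ 2) (h : l + l⁻¹ = m) : l ^ 12 = 1 := by
  have hquad : l ^ 2 - m * l + 1 = 0 := by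
    field_simp at h
    linear_combination h
  obtain ⟨hm₁, hm₂⟩ := abs_le.mp hm
  interval_cases m <;> push_cast at hquad
  · obtain rfl : l = -1 := by linear_combination (exp := 2) hquad
    norm_num
  · linear_combination (l - 1) * (l ^ 9 + l ^ 6 + l ^ 3 + 1) * hquad
  · linear_combination (l ^ 2 - 1) * (l ^ 8 + l ^ 4 + 1) * hquad
  · linear_combination (l + 1) * (l ^ 3 - 1) * (l ^ 6 + 1) * hquad
  · obtain rfl : l = 1 := by linear_combination (exp := 2) hquad
    norm_num

lemma exists_intCast_of_add_inv_eq_ratCast {l : ℂ} {τ : ℕ} (hτ : τ ≠ 0) (hl : l ^ τ = 1)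
    {q : ℚ} (hq : l + l⁻¹ = q) : ∃ m : ℤ, |m| ≤ 2 ∧ l + l⁻¹ = m := by
  have hl' : l⁻¹ ^ τ = 1 := by rw [inv_pow, hl, inv_one]
  have hint : IsIntegral ℤ (l + l⁻¹) :=
    (IsIntegral.of_pow (Nat.pos_of_ne_zero hτ) (hl ▸ isIntegral_one)).add
      (IsIntegral.of_pow (Nat.pos_of_ne_zero hτ) (hl' ▸ isIntegral_one))
  obtain ⟨m, hm⟩ := hint.exists_int_iff_exists_rat.mp ⟨q, hq⟩
  refine ⟨m, ?_, hm⟩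
  have hnorm : ‖l‖ = 1 := Complex.norm_eq_one_of_pow_eq_one hl hτ
  have : |(m : ℝ)| ≤ 2 := calc
    |(m : ℝ)| = ‖l + l⁻¹‖ := by rw [hm, Complex.norm_intCast]
    _ ≤ ‖l‖ + ‖l⁻¹‖ := norm_add_le _ _
    _ = 2 := by rw [norm_inv, hnorm]; norm_num
  exact_mod_cast this

theorem pow_twelve_eq_one_of_add_inv_eq_ratCast {l : ℂ} {τ : ℕ} (hτ : τ ≠ 0) (hl : l ^ τ = 1)
    {q : ℚ} (hq : l + l⁻¹ = q) : l ^ 12 = 1 := by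
  obtain ⟨m, hm, hlm⟩ := exists_intCast_of_add_inv_eq_ratCast hτ hl hq
  exact pow_twelve_eq_one_of_add_inv_eq_intCast (by rintro rfl; simp [hτ] at hl) hm hlm

theorem Module.End.pow_eq_one_of_forall_hasEigenvalue {K M : Type*} [Field K] [IsAlgClosed K]
    [AddCommGroup M] [Module K M] [FiniteDimensional K M] {f : Module.End K M} {τ m : ℕ}
    (hτ : (τ : K) ≠ 0) (hf : f ^ τ = 1) (hev : ∀ μ, f.HasEigenvalue μ → μ ^ m = 1) :
    f ^ m = 1 := by
  obtain rfl | hm := eq_or_ne m 0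
  · exact pow_zero f
  have hsep : (minpoly K f).Separable :=
    (separable_X_pow_sub_C 1 hτ one_ne_zero).of_dvd (minpoly.dvd_iff.mpr (by simp [hf]))
  have hne : (X ^ m - C 1 : K[X]) ≠ 0 := X_pow_sub_C_ne_zero (Nat.pos_of_ne_zero hm) 1
  have hdvd : minpoly K f ∣ X ^ m - C 1 := by
    rw [(IsAlgClosed.splits _).eq_prod_roots_of_monic
        (minpoly.monic (Algebra.IsIntegral.isIntegral f)),
      Multiset.prod_X_sub_C_dvd_iff_le_roots hne, Multiset.le_iff_subset (nodup_roots hsep)]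
    intro μ hμ
    rw [mem_roots hne]
    simpa [sub_eq_zero] using hev μ (hasEigenvalue_iff_isRoot.mpr (isRoot_of_mem_roots hμ))
  simpa [sub_eq_zero] using minpoly.dvd_iff.mp hdvd

theorem Matrix.pow_eq_one_of_forall_eigenvalue {K ι : Type*} [Field K] [IsAlgClosed K]
    [Fintype ι] [DecidableEq ι] {A : Matrix ι ι K} {τ m : ℕ} (hτ : (τ : K) ≠ 0) (hA : A ^ τ = 1)
    (hev : ∀ (μ : K) (x : ι → K), x ≠ 0 → A *ᵥ x = μ • x → μ ^ m = 1) : A ^ m = 1 := by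
  apply toLinAlgEquiv'.injective
  rw [map_pow, map_one]
  refine Module.End.pow_eq_one_of_forall_hasEigenvalue hτ (by rw [← map_pow, hA, map_one])
    fun μ hμ => ?_
  obtain ⟨x, hx⟩ := hμ.exists_hasEigenvector
  exact hev μ x hx.2 (by rw [← toLinAlgEquiv'_apply]; exact hx.apply_eq_smul)

lemma IsIdempotentElem.two_nsmul_sub_one_mul_self {S : Type*} [Ring S] {p : S}
    (hp : IsIdempotentElem p) : (2 • p - 1) * (2 • p - 1) = 1 := by
  simp only [mul_sub, sub_mul, smul_mul_assoc, mul_smul_comm, hp.eq, mul_one, one_mul]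
  abel

section Reflections

variable {R : Type*} [CommRing R] {k n : Type*} [Fintype k] [Fintype n] [DecidableEq n]
  {V : Matrix k n R}

lemma Matrix.isIdempotentElem_mul_transpose (hV : Vᵀ * V = 1) : IsIdempotentElem (V * Vᵀ) := by
  rw [IsIdempotentElem, Matrix.mul_assoc, ← Matrix.mul_assoc Vᵀ, hV, Matrix.one_mul]

lemma Matrix.transpose_mul_anticommutator_reflections [DecidableEq k] (hV : Vᵀ * V = 1)
    (Q : Matrix k k R) :
    Vᵀ * ((2 • Q - 1) * (2 • (V * Vᵀ) - 1) + (2 • (V * Vᵀ) - 1) * (2 • Q - 1)) =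
      4 • (Vᵀ * Q * V * Vᵀ) - 2 • Vᵀ := by
  simp only [Matrix.mul_add, Matrix.mul_sub, Matrix.sub_mul, Matrix.smul_mul, Matrix.mul_smul,
    Matrix.mul_one, Matrix.one_mul, ← Matrix.mul_assoc, hV]
  abel

end Reflections

section Eigenvectors

variable {K : Type*} [Field K] {k n : Type*} [Fintype k] [Fintype n] [DecidableEq k]

lemma Matrix.pow_mulVec_of_mulVec_eq_smul {A : Matrix k k K} {x : k → K} {μ : K}
    (hx : A *ᵥ x = μ • x) (j : ℕ) : (A ^ j) *ᵥ x = μ ^ j • x := by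
  induction j with
  | zero => simp
  | succ j ih => rw [pow_succ', ← mulVec_mulVec, ih, mulVec_smul, hx, smul_smul, pow_succ]

lemma Matrix.mulVec_eq_inv_smul_of_mul_eq_one {A B : Matrix k k K} (hBA : B * A = 1)
    {x : k → K} (hx : x ≠ 0) {μ : K} (hAx : A *ᵥ x = μ • x) : B *ᵥ x = μ⁻¹ • x := by
  have hx' : μ • (B *ᵥ x) = x := by rw [← mulVec_smul, ← hAx, mulVec_mulVec, hBA, one_mulVec]
  have hμ : μ ≠ 0 := by rintro rfl; exact hx (by simpa using hx'.symm)
  exact (eq_inv_smul_iff₀ hμ).mpr hx'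

variable {V : Matrix k n K} {Q : Matrix k k K} {x : k → K} {μ : K}

lemma Matrix.sq_eq_one_of_transpose_mulVec_eq_zero (hQ : IsIdempotentElem Q) (hx : x ≠ 0)
    (hUx : ((2 • Q - 1) * (2 • (V * Vᵀ) - 1)) *ᵥ x = μ • x) (hVx : Vᵀ *ᵥ x = 0) :
    μ ^ 2 = 1 := by
  have hAx : (2 • (V * Vᵀ) - 1) *ᵥ x = -x := by
    rw [sub_mulVec, smul_mulVec, ← mulVec_mulVec, hVx]
    simp
  have hBx : (2 • Q - 1) *ᵥ x = -(μ • x) := by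
    rw [← mulVec_mulVec, hAx, mulVec_neg] at hUx
    rw [← hUx, neg_neg]
  have hxx : μ ^ 2 • x = x := calc
    μ ^ 2 • x = (2 • Q - 1) *ᵥ ((2 • Q - 1) *ᵥ x) := by
      rw [hBx, mulVec_neg, mulVec_smul, hBx, smul_neg, neg_neg, smul_smul, sq]
    _ = x := by rw [mulVec_mulVec, hQ.two_nsmul_sub_one_mul_self, one_mulVec]
  exact smul_left_injective K hx (hxx.trans (one_smul K x).symm)

lemma Matrix.four_nsmul_compression_mulVec [DecidableEq n] (hV : Vᵀ * V = 1)
    (hQ : IsIdempotentElem Q) (hx : x ≠ 0) (hUx : ((2 • Q - 1) * (2 • (V * Vᵀ) - 1)) *ᵥ x = μ • x) :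
    4 • ((Vᵀ * Q * V) *ᵥ (Vᵀ *ᵥ x)) = (μ + μ⁻¹ + 2) • (Vᵀ *ᵥ x) := by
  have hBA : (2 • (V * Vᵀ) - 1) * (2 • Q - 1) * ((2 • Q - 1) * (2 • (V * Vᵀ) - 1)) = 1 := by
    rw [Matrix.mul_assoc, ← Matrix.mul_assoc (2 • Q - 1), hQ.two_nsmul_sub_one_mul_self,
      Matrix.one_mul, (isIdempotentElem_mul_transpose hV).two_nsmul_sub_one_mul_self]
  have h := congrArg (· *ᵥ x) (transpose_mul_anticommutator_reflections hV Q)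
  simp only [← mulVec_mulVec, add_mulVec, sub_mulVec, smul_mulVec, hUx,
    mulVec_eq_inv_smul_of_mul_eq_one hBA hx hUx, mulVec_add, mulVec_smul] at h
  simp only [add_smul, h, ← mulVec_mulVec, ofNat_smul_eq_nsmul]
  abel

end Eigenvectors

theorem Matrix.eigenvalue_pow_twelve_eq_one {k n : Type*} [Fintype k] [Fintype n]
    [DecidableEq k] [DecidableEq n] {V : Matrix k n ℂ} {Q : Matrix k k ℂ} (hV : Vᵀ * V = 1)
    (hQ : IsIdempotentElem Q)
    (hrat : ∀ (ν : ℂ) (y : n → ℂ), y ≠ 0 → (Vᵀ * Q * V) *ᵥ y = ν • y → ∃ q : ℚ, ν = q)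
    {τ : ℕ} (hτ : τ ≠ 0) (hUτ : ((2 • Q - 1) * (2 • (V * Vᵀ) - 1)) ^ τ = 1)
    {x : k → ℂ} {μ : ℂ} (hx : x ≠ 0) (hUx : ((2 • Q - 1) * (2 • (V * Vᵀ) - 1)) *ᵥ x = μ • x) :
    μ ^ 12 = 1 := by
  have hμτ : μ ^ τ = 1 := by
    refine smul_left_injective ℂ hx ?_
    simp only [← pow_mulVec_of_mulVec_eq_smul hUx τ, hUτ, one_mulVec, one_smul]
  by_cases hVx : Vᵀ *ᵥ x = 0
  · rw [show 12 = 2 * 6 from rfl, pow_mul, sq_eq_one_of_transpose_mulVec_eq_zero hQ hx hUx hVx,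
      one_pow]
  obtain ⟨q, hq⟩ := hrat ((μ + μ⁻¹ + 2) / 4) _ hVx <| by
    rw [div_eq_inv_mul, mul_smul, ← four_nsmul_compression_mulVec hV hQ hx hUx,
      ← ofNat_smul_eq_nsmul (R := ℂ), smul_smul, inv_mul_cancel₀ (by norm_num), one_smul]
  exact pow_twelve_eq_one_of_add_inv_eq_ratCast hτ hμτ (q := 4 * q - 2) <| by
    push_cast
    linear_combination 4 * hq

theorem stmt_17_general (k n f : ℕ)
    (V : Matrix (Fin k) (Fin n) ℝ) (W : Matrix (Fin k) (Fin f) ℝ)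
    (hV : Vᵀ * V = 1) (hW : Wᵀ * W = 1)
    (U : Matrix (Fin k) (Fin k) ℝ)
    (hU : U = (2 • (W * Wᵀ) - 1) * (2 • (V * Vᵀ) - 1))
    (hrat : ∀ μ : ℂ,
      (∃ x : Fin n → ℂ, x ≠ 0 ∧
        ((Vᵀ * W * Wᵀ * V).map Complex.ofReal) *ᵥ x = μ • x) →
      ∃ q : ℚ, μ = (q : ℂ))
    (τ : ℕ) (hτ : 1 < τ) (hUτ : U ^ τ = 1)
    (hmin : ∀ s : ℕ, 1 ≤ s → s < τ → U ^ s ≠ 1) :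
    τ = 2 ∨ τ = 3 ∨ τ = 4 ∨ τ = 6 ∨ τ = 12 := by
  set Vc := V.map Complex.ofRealHom
  set Wc := W.map Complex.ofRealHom
  have hVc : Vcᵀ * Vc = 1 := by
    rw [← transpose_map, ← Matrix.map_mul, hV, Matrix.map_one _ (map_zero _) (map_one _)]
  have hWc : Wcᵀ * Wc = 1 := by
    rw [← transpose_map, ← Matrix.map_mul, hW, Matrix.map_one _ (map_zero _) (map_one _)]
  have hUc : Complex.ofRealHom.mapMatrix U = (2 • (Wc * Wcᵀ) - 1) * (2 • (Vc * Vcᵀ) - 1) := by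
    simp only [hU, map_mul, map_sub, map_nsmul, map_one, RingHom.mapMatrix_apply, Matrix.map_mul,
      transpose_map, Vc, Wc]
  have hM : (Vᵀ * W * Wᵀ * V).map Complex.ofReal = Vcᵀ * (Wc * Wcᵀ) * Vc := by
    change (Vᵀ * W * Wᵀ * V).map Complex.ofRealHom = _
    simp only [Matrix.map_mul, transpose_map, Matrix.mul_assoc, Vc, Wc]
  have hτ₀ : τ ≠ 0 := by omega
  have hUcτ : ((2 • (Wc * Wcᵀ) - 1) * (2 • (Vc * Vcᵀ) - 1)) ^ τ = 1 := by
    rw [← hUc, ← map_pow, hUτ, map_one]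
  have hUc12 : ((2 • (Wc * Wcᵀ) - 1) * (2 • (Vc * Vcᵀ) - 1)) ^ 12 = 1 :=
    pow_eq_one_of_forall_eigenvalue (Nat.cast_ne_zero.mpr hτ₀) hUcτ fun _ _ hx hUx =>
      eigenvalue_pow_twelve_eq_one hVc (isIdempotentElem_mul_transpose hWc)
        (fun ν y hy hMy => hrat ν ⟨y, hy, by rwa [hM]⟩) hτ₀ hUcτ hx hUx
  have hU12 : U ^ 12 = 1 := Matrix.map_injective Complex.ofReal_injective <|
    show Complex.ofRealHom.mapMatrix (U ^ 12) = Complex.ofRealHom.mapMatrix 1 by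
      rw [map_pow, hUc, hUc12, map_one]
  have hord : orderOf U = τ :=
    (orderOf_eq_iff (by omega)).mpr ⟨hUτ, fun s hs hs₀ => hmin s hs₀ hs⟩
  have hdvd : τ ∣ 12 := hord ▸ orderOf_dvd_of_pow_eq_one hU12
  have hle : τ ≤ 12 := Nat.le_of_dvd (by norm_num) hdvd
  interval_cases τ <;> omega

theorem stmt_17 (k n f : ℕ) (hk : 0 < k) (hn : 0 < n) (hf : 0 < f)
    (V : Matrix (Fin k) (Fin n) ℝ) (W : Matrix (Fin k) (Fin f) ℝ)
    (hV : Vᵀ * V = 1) (hW : Wᵀ * W = 1)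
    (U : Matrix (Fin k) (Fin k) ℝ)
    (hU : U = (2 • (W * Wᵀ) - 1) * (2 • (V * Vᵀ) - 1))
    (hrat : ∀ μ : ℂ,
      (∃ x : Fin n → ℂ, x ≠ 0 ∧
        ((Vᵀ * W * Wᵀ * V).map Complex.ofReal) *ᵥ x = μ • x) →
      ∃ q : ℚ, μ = (q : ℂ))
    (τ : ℕ) (hτ : 1 < τ) (hUτ : U ^ τ = 1)
    (hmin : ∀ s : ℕ, 1 ≤ s → s < τ → U ^ s ≠ 1) :
    τ = 2 ∨ τ = 3 ∨ τ = 4 ∨ τ = 6 ∨ τ = 12 :=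
  stmt_17_general k n f V W hV hW U hU hrat τ hτ hUτ hmin
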